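/- arXiv:2112.08585 — 5 statements merged into one kernel-verified Lean document; each statement's English description precedes it below -/
import Mathlib

section
/- Let n > 1 be an integer, d ≥ 2 an integer, and r an integer with n - ⌊(n-1)d/2⌋ ≤ r ≤ n and n ≡ r (mod d). Let (c(k)) be a sequence of complex numbers such that c(k) = 0 for (n-r)/d < k ≤ n-1, and such that c(ln+k) = c(ln)·c(k) for all nonnegative integers l and k with 0 ≤ k ≤ n-1. Then for all nonnegative integers l and 0 ≤ k ≤ n-1: ∑_{j=0}^{ln+k} c(j)c(ln+k-j) = (∑_{t=0}^{l} c(tn)c((l-t)n)) · (∑_{j=0}^{k} c(j)c(k-j)). -/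
/-!
Write `f = ∑ c(j) Xʲ` and `N = n`. The multiplicativity `c(lN + k) = c(lN) c(k)` says
`f = A(X^N) · B(X)` with `A = ∑ c(lN) Xˡ` and `B` the truncation of `f` below degree `N`.
Since `2 (n - r)/d < n`, of two indices below `N` summing to at least `N` one lies in
`((n - r)/d, n - 1]`, where `c` vanishes; so `B²` has degree `< N`, and in `f² = A²(X^N) · B²`
the coefficient of `X^(lN + k)` is that of `Xˡ` in `A²` times that of `Xᵏ` in `B²`.
-/

open Finset PowerSeries

section SelfConvolution

variable {R : Type*} [Semiring R]

def selfConvolution (c : ℕ → R) (s : ℕ) : R :=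
  ∑ j ∈ range (s + 1), c j * c (s - j)

theorem selfConvolution_eq_coeff_mk_mul_mk (c : ℕ → R) (s : ℕ) :
    selfConvolution c s = coeff s (mk c * mk c) := by
  rw [coeff_mul, Nat.sum_antidiagonal_eq_sum_range_succ_mk]
  simp only [coeff_mk, selfConvolution]

theorem selfConvolution_congr {c c' : ℕ → R} {s : ℕ} (h : ∀ j ≤ s, c j = c' j) :
    selfConvolution c s = selfConvolution c' s :=
  sum_congr rfl fun j hj => by
    rw [h j (Nat.lt_succ_iff.mp (mem_range.mp hj)), h (s - j) (Nat.sub_le s j)]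

end SelfConvolution

section Expand

variable {R : Type*} [CommRing R]

theorem coeff_expand_mul_of_coeff_eq_zero {N : ℕ} (hN : N ≠ 0) (F G : R⟦X⟧)
    (hG : ∀ j, N ≤ j → coeff j G = 0) (l : ℕ) {k : ℕ} (hk : k < N) :
    coeff (l * N + k) (expand N hN F * G) = coeff l F * coeff k G := by
  rw [coeff_mul, sum_eq_single (l * N, k), mul_comm l, coeff_expand_mul]
  · rintro ⟨a, b⟩ hab hne
    simp only [HasAntidiagonal.mem_antidiagonal, mul_comm l N] at hab
    by_cases hb : N ≤ b
    · rw [hG b hb, mul_zero]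
    by_cases ha : N ∣ a
    · obtain ⟨q, rfl⟩ := ha
      have hq : q = l := by
        simpa only [Nat.mul_add_div (Nat.pos_of_ne_zero hN), Nat.div_eq_of_lt (not_le.mp hb),
          Nat.div_eq_of_lt hk, add_zero] using congrArg (· / N) hab
      subst hq
      exact absurd (by rw [mul_comm N q, show b = k by omega]) hne
    · rw [coeff_expand_of_not_dvd N hN F ha, zero_mul]
  · simp

theorem selfConvolution_mul_add_of_mul_eq_zero {N : ℕ} (hN : N ≠ 0) (c : ℕ → R)
    (hmul : ∀ l k, k < N → c (l * N + k) = c (l * N) * c k)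
    (hvan : ∀ i j, i < N → j < N → N ≤ i + j → c i * c j = 0) (l : ℕ) {k : ℕ} (hk : k < N) :
    selfConvolution c (l * N + k) =
      selfConvolution (fun t => c (t * N)) l * selfConvolution c k := by
  set A : R⟦X⟧ := mk fun t => c (t * N)
  set B : R⟦X⟧ := mk fun i => if i < N then c i else 0
  have hB : ∀ j, N ≤ j → coeff j B = 0 := fun j hj => by simp [B, not_lt.mpr hj]
  have hBB : ∀ j, N ≤ j → coeff j (B * B) = 0 := by
    intro j hj
    rw [coeff_mul]
    refine sum_eq_zero fun ⟨a, b⟩ hab => ?_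
    simp only [HasAntidiagonal.mem_antidiagonal] at hab
    simp only [B, coeff_mk]
    split_ifs with ha hb
    · exact hvan a b ha hb (hab ▸ hj)
    all_goals simp
  have hfac : mk c = expand N hN A * B := by
    ext s
    rw [← Nat.div_add_mod' s N, coeff_expand_mul_of_coeff_eq_zero hN A B hB _
      (Nat.mod_lt s (Nat.pos_of_ne_zero hN))]
    simp [A, B, Nat.mod_lt s (Nat.pos_of_ne_zero hN), hmul]
  have hBk : selfConvolution c k = coeff k (B * B) := by
    rw [← selfConvolution_eq_coeff_mk_mul_mk]
    exact selfConvolution_congr fun j hj => by simp [show j < N by omega]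
  calc selfConvolution c (l * N + k)
      = coeff (l * N + k) (expand N hN (A * A) * (B * B)) := by
        rw [selfConvolution_eq_coeff_mk_mul_mk, hfac, map_mul (expand N hN), mul_mul_mul_comm]
    _ = selfConvolution (fun t => c (t * N)) l * selfConvolution c k := by
        rw [coeff_expand_mul_of_coeff_eq_zero hN _ _ hBB l hk, hBk,
          selfConvolution_eq_coeff_mk_mul_mk]

end Expand

theorem mul_eq_zero_of_le_add_of_eq_zero_above {R : Type*} [MulZeroClass R] {N : ℕ} {m : ℤ}
    (hm : 2 * m < N) (c : ℕ → R) (hzero : ∀ k : ℕ, m < k → k < N → c k = 0)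
    (i j : ℕ) (hi : i < N) (hj : j < N) (hij : N ≤ i + j) : c i * c j = 0 := by
  rcases lt_or_ge m i with hmi | hmi
  · rw [hzero i hmi (by exact_mod_cast hi), zero_mul]
  · rw [hzero j (by omega) (by exact_mod_cast hj), mul_zero]

theorem two_mul_sub_ediv_le_sub_one {n d r : ℤ} (hd : 0 < d)
    (hr : n - (n - 1) * d / 2 ≤ r) : 2 * ((n - r) / d) ≤ n - 1 := by
  have h1 := Int.mul_ediv_self_le (x := n - r) hd.ne'
  have h2 := Int.mul_ediv_self_le (x := (n - 1) * d) (k := 2) two_ne_zero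
  exact le_of_mul_le_mul_left (by nlinarith) hd

theorem stmt1_general (n d : ℤ) (r : ℤ) (hd : 2 ≤ d)
    (hr1 : n - (n - 1) * d / 2 ≤ r)
    (c : ℕ → ℂ)
    (hzero : ∀ k : ℕ, (n - r) / d < (k : ℤ) → (k : ℤ) ≤ n - 1 → c k = 0)
    (hmul : ∀ l k : ℕ, (k : ℤ) ≤ n - 1 → c (l * n.toNat + k) = c (l * n.toNat) * c k) :
    ∀ l k : ℕ, (k : ℤ) ≤ n - 1 →
      ∑ j ∈ range (l * n.toNat + k + 1), c j * c (l * n.toNat + k - j) =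
        (∑ t ∈ range (l + 1), c (t * n.toNat) * c ((l - t) * n.toNat)) *
          (∑ j ∈ range (k + 1), c j * c (k - j)) := by
  intro l k hk
  have hm := two_mul_sub_ediv_le_sub_one (by omega : 0 < d) hr1
  exact selfConvolution_mul_add_of_mul_eq_zero (by omega) c
    (fun a b hb => hmul a b (by omega))
    (mul_eq_zero_of_le_add_of_eq_zero_above (by omega) c fun i hmi hiN => hzero i hmi (by omega))
    l (by omega)

theorem stmt1 (n d : ℤ) (r : ℤ) (hn : 1 < n) (hd : 2 ≤ d)
    (hr1 : n - (n - 1) * d / 2 ≤ r) (hr2 : r ≤ n) (hmod : n ≡ r [ZMOD d])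
    (c : ℕ → ℂ)
    (hzero : ∀ k : ℕ, (n - r) / d < (k : ℤ) → (k : ℤ) ≤ n - 1 → c k = 0)
    (hmul : ∀ l k : ℕ, (k : ℤ) ≤ n - 1 → c (l * n.toNat + k) = c (l * n.toNat) * c k) :
    ∀ l k : ℕ, (k : ℤ) ≤ n - 1 →
      ∑ j ∈ range (l * n.toNat + k + 1), c j * c (l * n.toNat + k - j) =
        (∑ t ∈ range (l + 1), c (t * n.toNat) * c ((l - t) * n.toNat)) *
          (∑ j ∈ range (k + 1), c j * c (k - j)) :=
  stmt1_general n d r hd hr1 c hzero hmul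
end

section
/- Let n be a positive integer, d ≥ 3 an integer, and r an integer with n ≡ r (mod d) and n - ⌊d(n-1)/3⌋ ≤ r ≤ n. Let (c(k)) be a sequence of complex numbers with c(k) = 0 for (n-r)/d < k < n, and with c(ln+k) = c(ln)·c(k) for all nonnegative integers l, k with 0 ≤ k ≤ n-1. Then for all nonnegative integers l and 0 ≤ k ≤ n-1: ∑_{i+j+s = ln+k} c(i)c(j)c(s) = (∑_{a=0}^{l} c(an) ∑_{t=0}^{l-a} c(tn)c((l-a-t)n)) · (∑_{i=0}^{k} c(i) ∑_{j=0}^{k-i} c(j)c(k-i-j)), where the left sum runs over triples (i,j,s) of nonnegative integers with i+j+s = ln+k. -/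
/-!
Write `N = l * n + k` with `k < n`. The hypotheses say that `c N = c (l * n) * c k` and that
the low factor `c k` vanishes for `m < k < n`, where `m = max ((n - r) / d) 0` satisfies
`3 * m < n`. This factorization survives Cauchy products as long as the supports of the low
factors add up to less than `n`: in `c I * c J` with `I + J = N`, both low digits of `I` and `J`
are at most `m`, so their sum is below `n` and there is no carry into the high digit. Applying
this twice to the triple convolution `c * (c * c)` splits it into the triple convolution of
`l ↦ c (l * n)` at `l` times that of `c` at `k`.
-/

open Finset

variable {R : Type*} [CommSemiring R]

def cauchyProduct (c e : ℕ → R) (N : ℕ) : R :=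
  ∑ p ∈ antidiagonal N, c p.1 * e p.2

lemma cauchyProduct_eq_sum_range (c e : ℕ → R) (N : ℕ) :
    cauchyProduct c e N = ∑ i ∈ range (N + 1), c i * e (N - i) :=
  Nat.sum_antidiagonal_eq_sum_range_succ (fun i j => c i * e j) N

/-- `b` is the factor of the low base-`n` digit; its values at `k ≥ n` play no role. -/
structure IsBlockFactorization (n m : ℕ) (c a b : ℕ → R) : Prop where
  apply_mul_add : ∀ l k, k < n → c (l * n + k) = a l * b k
  eq_zero : ∀ k, m < k → k < n → b k = 0

lemma Nat.eq_and_eq_of_mul_add_eq_mul_add {n q q' r r' : ℕ} (hr : r < n) (hr' : r' < n)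
    (h : q * n + r = q' * n + r') : q = q' ∧ r = r' := by
  have hn : 0 < n := by omega
  obtain ⟨hq, hr⟩ := (Nat.div_mod_unique hn).2 ⟨(by ring : r + n * q = q * n + r), hr⟩
  obtain ⟨hq', hr'⟩ :=
    (Nat.div_mod_unique hn).2 ⟨(by ring : r' + n * q' = q' * n + r'), hr'⟩
  rw [h] at hq hr
  exact ⟨hq.symm.trans hq', hr.symm.trans hr'⟩

namespace IsBlockFactorization

variable {n m m' : ℕ} {c a b c' a' b' : ℕ → R}

lemma apply_eq (h : IsBlockFactorization n m c a b) (hn : 0 < n) (N : ℕ) :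
    c N = a (N / n) * b (N % n) := by
  rw [← h.apply_mul_add _ _ (Nat.mod_lt N hn), Nat.div_add_mod']

lemma mod_le_of_ne_zero (h : IsBlockFactorization n m c a b) (hn : 0 < n) {N : ℕ}
    (hN : c N ≠ 0) : N % n ≤ m := by
  by_contra hm
  rw [h.apply_eq hn, h.eq_zero _ (by omega) (Nat.mod_lt N hn), mul_zero] at hN
  exact hN rfl

theorem cauchyProduct (h : IsBlockFactorization n m c a b)
    (h' : IsBlockFactorization n m' c' a' b') (hmm : m + m' < n) :
    IsBlockFactorization n (m + m') (cauchyProduct c c') (cauchyProduct a a')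
      (cauchyProduct b b') where
  apply_mul_add l k hk := by
    have hn : 0 < n := by omega
    simp only [_root_.cauchyProduct]
    rw [sum_mul_sum, ← sum_product']
    refine (sum_of_injOn (fun x => (x.1.1 * n + x.2.1, x.1.2 * n + x.2.2)) ?_ ?_ ?_ ?_).symm
    · rintro ⟨⟨α, β⟩, ⟨i, j⟩⟩ hx ⟨⟨α', β'⟩, ⟨i', j'⟩⟩ hx' he
      simp only [coe_product, Set.mem_prod, mem_coe, HasAntidiagonal.mem_antidiagonal,
        Prod.mk.injEq] at hx hx' he
      obtain ⟨rfl, rfl⟩ := Nat.eq_and_eq_of_mul_add_eq_mul_add (by omega) (by omega) he.1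
      obtain ⟨rfl, rfl⟩ := Nat.eq_and_eq_of_mul_add_eq_mul_add (by omega) (by omega) he.2
      rfl
    · rintro ⟨⟨α, β⟩, ⟨i, j⟩⟩ hx
      simp only [coe_product, Set.mem_prod, mem_coe, HasAntidiagonal.mem_antidiagonal] at hx ⊢
      rw [← hx.1, ← hx.2]
      ring
    · rintro ⟨I, J⟩ hIJ hnot
      rw [HasAntidiagonal.mem_antidiagonal] at hIJ
      dsimp only at hIJ ⊢
      by_contra hne
      have hI := h.mod_le_of_ne_zero hn (left_ne_zero_of_mul hne)
      have hJ := h'.mod_le_of_ne_zero hn (right_ne_zero_of_mul hne)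
      obtain ⟨hl, hk'⟩ : I / n + J / n = l ∧ I % n + J % n = k := by
        refine Nat.eq_and_eq_of_mul_add_eq_mul_add (by omega) hk ?_
        linarith [Nat.div_add_mod' I n, Nat.div_add_mod' J n]
      refine hnot ⟨((I / n, J / n), (I % n, J % n)), ?_, ?_⟩
      · simp only [coe_product, Set.mem_prod, mem_coe, HasAntidiagonal.mem_antidiagonal]
        exact ⟨hl, hk'⟩
      · simp only [Nat.div_add_mod']
    · rintro ⟨⟨α, β⟩, ⟨i, j⟩⟩ hx
      simp only [mem_product, HasAntidiagonal.mem_antidiagonal] at hx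
      dsimp only
      rw [h.apply_mul_add _ _ (by omega), h'.apply_mul_add _ _ (by omega)]
      ring
  eq_zero k hk hkn := sum_eq_zero fun ⟨i, j⟩ hij => by
    rw [HasAntidiagonal.mem_antidiagonal] at hij
    rcases Nat.lt_or_ge m i with hi | hi
    · rw [h.eq_zero i hi (by omega), zero_mul]
    · rw [h'.eq_zero j (by omega) (by omega), mul_zero]

end IsBlockFactorization

lemma Int.three_mul_ediv_le_of_le {n d r : ℤ} (hd : 0 < d) (hr : n - d * (n - 1) / 3 ≤ r) :
    3 * ((n - r) / d) ≤ n - 1 := by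
  have h1 : d * ((n - r) / d) ≤ n - r := Int.mul_ediv_self_le hd.ne'
  have h3 : 3 * (d * (n - 1) / 3) ≤ d * (n - 1) := Int.mul_ediv_self_le (by norm_num)
  exact le_of_mul_le_mul_left (by linarith : d * (3 * ((n - r) / d)) ≤ d * (n - 1)) hd

theorem stmt3_general (n d : ℤ) (r : ℤ) (hn : 0 < n) (hd : 3 ≤ d)
    (hr1 : n - d * (n - 1) / 3 ≤ r)
    (c : ℕ → ℂ)
    (hzero : ∀ k : ℕ, (n - r) / d < (k : ℤ) → (k : ℤ) < n → c k = 0)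
    (hmul : ∀ l k : ℕ, (k : ℤ) ≤ n - 1 → c (l * n.toNat + k) = c (l * n.toNat) * c k) :
    ∀ l k : ℕ, (k : ℤ) ≤ n - 1 →
      ∑ i ∈ range (l * n.toNat + k + 1), ∑ j ∈ range (l * n.toNat + k - i + 1),
          c i * c j * c (l * n.toNat + k - i - j) =
        (∑ a ∈ range (l + 1), c (a * n.toNat) *
            ∑ t ∈ range (l - a + 1), c (t * n.toNat) * c ((l - a - t) * n.toNat)) *
          (∑ i ∈ range (k + 1), c i * ∑ j ∈ range (k - i + 1), c j * c (k - i - j)) := by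
  intro l k hk
  have hq := Int.three_mul_ediv_le_of_le (by omega) hr1
  have hc : IsBlockFactorization n.toNat ((n - r) / d).toNat c (fun l => c (l * n.toNat)) c :=
    ⟨fun l k hk => hmul l k (by omega), fun k h1 h2 => hzero k (by omega) (by omega)⟩
  have hc3 := hc.cauchyProduct (hc.cauchyProduct hc (by omega)) (by omega)
  simpa only [cauchyProduct_eq_sum_range, mul_sum, mul_assoc] using
    hc3.apply_mul_add l k (by omega)

theorem stmt3 (n d : ℤ) (r : ℤ) (hn : 0 < n) (hd : 3 ≤ d)
    (hr1 : n - d * (n - 1) / 3 ≤ r) (hr2 : r ≤ n) (hmod : n ≡ r [ZMOD d])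
    (c : ℕ → ℂ)
    (hzero : ∀ k : ℕ, (n - r) / d < (k : ℤ) → (k : ℤ) < n → c k = 0)
    (hmul : ∀ l k : ℕ, (k : ℤ) ≤ n - 1 → c (l * n.toNat + k) = c (l * n.toNat) * c k) :
    ∀ l k : ℕ, (k : ℤ) ≤ n - 1 →
      ∑ i ∈ range (l * n.toNat + k + 1), ∑ j ∈ range (l * n.toNat + k - i + 1),
          c i * c j * c (l * n.toNat + k - i - j) =
        (∑ a ∈ range (l + 1), c (a * n.toNat) *
            ∑ t ∈ range (l - a + 1), c (t * n.toNat) * c ((l - a - t) * n.toNat)) *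
          (∑ i ∈ range (k + 1), c i * ∑ j ∈ range (k - i + 1), c j * c (k - i - j)) :=
  stmt3_general n d r hn hd hr1 c hzero hmul
end

section
/- For any odd prime p, ∑_{k=0}^{p-1} (1/16^k) ∑_{j=0}^{k} C(2j,j)² C(2k-2j,k-j)² (4j+1)(4k-4j+1) ≡ 0 (mod p³), where C(m,r) denotes the binomial coefficient. -/
/-!
Write `a k = (4k+1) C(2k,k)² / 16^k`. The telescoping identity
`∑_{k<n} a k = 4 n² C(2n,n)² / 16^n`, applied to the inner sums of `∑_{j+l<p} a j * a l`,
turns the whole sum into `4 / 16^p · ∑_{j<p} (4j+1) g_j²` with `g_j = (p-j) C(2(p-j),p-j) C(2j,j)`.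

By Lucas' theorem `g_0 = p C(2p,p) ≡ 2p (mod p²)`, and the recurrence
`(n+1) C(2n+2,n+1) = 2(2n+1) C(2n,n)` carries this to `g_j ≡ 2p` for all `2j < p`; the symmetry
`j g_j = (p-j) g_{p-j}` then gives `g_j ≡ -2p` for the remaining `j < p`. Either way
`g_j² ≡ 4p² (mod p³)`, so the sum is `≡ 4p² ∑_{j<p} (4j+1) = 4p³(2p-1) ≡ 0 (mod p³)`.
-/

open Finset Nat

theorem sum_range_four_mul_add_one (n : ℕ) :
    ∑ j ∈ range n, (4 * j + 1 : ℤ) = n * (2 * n - 1) := by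
  induction n with
  | zero => simp
  | succ n ih => rw [sum_range_succ, ih]; push_cast; ring

def centralBinomTerm (k : ℕ) : ℚ := (4 * k + 1) * centralBinom k ^ 2 / 16 ^ k

theorem sum_range_centralBinomTerm (n : ℕ) :
    ∑ k ∈ range n, centralBinomTerm k = 4 * n ^ 2 * centralBinom n ^ 2 / 16 ^ n := by
  induction n with
  | zero => simp
  | succ n ih =>
    have h : ((n + 1) * centralBinom (n + 1) : ℚ) = 2 * (2 * n + 1) * centralBinom n := by
      exact_mod_cast succ_mul_centralBinom_succ n
    have h_sq : 4 * ((n + 1 : ℕ) : ℚ) ^ 2 * centralBinom (n + 1) ^ 2 =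
        16 * ((2 * n + 1) ^ 2 * centralBinom n ^ 2) := by
      push_cast
      linear_combination
        4 * ((n + 1) * centralBinom (n + 1) + 2 * (2 * n + 1) * centralBinom n) * h
    rw [sum_range_succ, ih, centralBinomTerm, h_sq, pow_succ]
    field_simp
    ring

theorem sum_convolution_centralBinomTerm (n : ℕ) :
    ∑ k ∈ range n, ∑ j ∈ range (k + 1), centralBinomTerm j * centralBinomTerm (k - j) =
      4 * (∑ j ∈ range n, (4 * j + 1) *
        ((n - j : ℕ) * centralBinom (n - j) * centralBinom j : ℚ) ^ 2) / 16 ^ n := by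
  rw [sum_range_diag_flip n fun j l => centralBinomTerm j * centralBinomTerm l, mul_sum, sum_div]
  refine sum_congr rfl fun j hj => ?_
  rw [← mul_sum, sum_range_centralBinomTerm, centralBinomTerm,
    ← pow_mul_pow_sub (16 : ℚ) (mem_range.mp hj).le]
  field_simp

section CentralBinomModPrime

variable {p : ℕ}

theorem Nat.Prime.dvd_centralBinom_sub_two (hp : p.Prime) : (p : ℤ) ∣ centralBinom p - 2 := by
  have := Fact.mk hp
  have h : centralBinom p ≡ 2 [MOD p] := by
    simpa [centralBinom, hp.pos] using
      Choose.choose_modEq_choose_mod_mul_choose_div_nat (n := 2 * p) (k := p) (p := p)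
  exact Nat.modEq_iff_dvd.mp h.symm

theorem Nat.Prime.isCoprime_sq_of_not_dvd (hp : p.Prime) {a : ℕ} (ha : ¬ p ∣ a) :
    IsCoprime ((p : ℤ) ^ 2) a := by
  exact_mod_cast Nat.isCoprime_iff_coprime.mpr (((hp.coprime_iff_not_dvd).mpr ha).pow_left 2)

theorem sq_dvd_mul_centralBinom_mul_centralBinom_sub (hp : p.Prime) {i n : ℕ}
    (hin : i + n = p) (hi : 2 * i < p) :
    (p : ℤ) ^ 2 ∣ n * centralBinom n * centralBinom i - 2 * p := by
  induction i generalizing n with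
  | zero =>
    obtain rfl : n = p := by omega
    rw [centralBinom_zero, Nat.cast_one, mul_one, pow_two, mul_comm 2, ← mul_sub]
    exact mul_dvd_mul_left _ hp.dvd_centralBinom_sub_two
  | succ i ih =>
    have h_prev := ih (n := n + 1) (by omega) (by omega)
    have hn : ((n + 1) * centralBinom (n + 1) : ℤ) = 2 * (2 * n + 1) * centralBinom n := by
      exact_mod_cast succ_mul_centralBinom_succ n
    have hi' : ((i + 1) * centralBinom (i + 1) : ℤ) = 2 * (2 * i + 1) * centralBinom i := by
      exact_mod_cast succ_mul_centralBinom_succ i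
    have hp_eq : (p : ℤ) = i + 1 + n := by exact_mod_cast hin.symm
    have h_step : ((i + 1 : ℕ) * (2 * n + 1 : ℕ) : ℤ) *
          (n * centralBinom n * centralBinom (i + 1) - 2 * p) =
        n * (2 * i + 1) * ((n + 1 : ℕ) * centralBinom (n + 1) * centralBinom i - 2 * p) -
          p ^ 2 * 2 := by
      push_cast
      linear_combination (n * (2 * n + 1) * centralBinom n : ℤ) * hi' -
        (n * (2 * i + 1) * centralBinom i : ℤ) * hn + 2 * (p : ℤ) * hp_eq
    have h_dvd : (p : ℤ) ^ 2 ∣ ((i + 1 : ℕ) * (2 * n + 1 : ℕ) : ℤ) *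
        (n * centralBinom n * centralBinom (i + 1) - 2 * p) := by
      rw [h_step]
      exact dvd_sub (dvd_mul_of_dvd_right h_prev _) (dvd_mul_right _ _)
    refine ((hp.isCoprime_sq_of_not_dvd ?_).mul_right
      (hp.isCoprime_sq_of_not_dvd ?_)).dvd_of_dvd_mul_left h_dvd
    · exact Nat.not_dvd_of_pos_of_lt (by omega) (by omega)
    · intro h
      have h_sum : p ∣ (2 * n + 1) + (2 * i + 1) := ⟨2, by omega⟩
      exact Nat.not_dvd_of_pos_of_lt (by omega) (by omega) ((Nat.dvd_add_right h).mp h_sum)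

theorem sq_dvd_mul_centralBinom_mul_centralBinom_add (hp : p.Prime) {i n : ℕ}
    (hin : i + n = p) (hi : p < 2 * i) (hn : 0 < n) :
    (p : ℤ) ^ 2 ∣ n * centralBinom n * centralBinom i + 2 * p := by
  have h_symm := sq_dvd_mul_centralBinom_mul_centralBinom_sub hp (add_comm i n ▸ hin) (by omega)
  have hp_eq : (p : ℤ) = i + n := by exact_mod_cast hin.symm
  have h_swap : (i : ℤ) * (n * centralBinom n * centralBinom i + 2 * p) =
      n * (i * centralBinom i * centralBinom n - 2 * p) + p ^ 2 * 2 := by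
    linear_combination (-2 * p : ℤ) * hp_eq
  have h_dvd : (p : ℤ) ^ 2 ∣ (i : ℤ) * (n * centralBinom n * centralBinom i + 2 * p) := by
    rw [h_swap]
    exact dvd_add (dvd_mul_of_dvd_right h_symm _) (dvd_mul_right _ _)
  exact (hp.isCoprime_sq_of_not_dvd
    (Nat.not_dvd_of_pos_of_lt (by omega) (by omega))).dvd_of_dvd_mul_left h_dvd

theorem cube_dvd_sq_mul_centralBinom_mul_centralBinom_sub (hp : p.Prime) (hodd : Odd p)
    {i n : ℕ} (hin : i + n = p) (hn : 0 < n) :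
    (p : ℤ) ^ 3 ∣ (n * centralBinom n * centralBinom i : ℤ) ^ 2 - 4 * p ^ 2 := by
  set g : ℤ := n * centralBinom n * centralBinom i
  have hi : 2 * i ≠ p := by rintro rfl; exact Nat.not_odd_iff_even.mpr (even_two_mul i) hodd
  rcases lt_or_gt_of_ne hi with hi | hi
  · obtain ⟨a, ha⟩ := sq_dvd_mul_centralBinom_mul_centralBinom_sub hp hin hi
    exact ⟨a * (p * a + 4), by linear_combination (g + 2 * p + p ^ 2 * a) * ha⟩
  · obtain ⟨a, ha⟩ := sq_dvd_mul_centralBinom_mul_centralBinom_add hp hin hi hn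
    exact ⟨a * (p * a - 4), by linear_combination (g - 2 * p + p ^ 2 * a) * ha⟩

theorem cube_dvd_sum_range_mul_sq (hp : p.Prime) (hodd : Odd p) :
    (p : ℤ) ^ 3 ∣ ∑ j ∈ range p, (4 * j + 1) *
      ((p - j : ℕ) * centralBinom (p - j) * centralBinom j : ℤ) ^ 2 := by
  have h_split : ∑ j ∈ range p, (4 * j + 1) *
        ((p - j : ℕ) * centralBinom (p - j) * centralBinom j : ℤ) ^ 2 =
      ∑ j ∈ range p, (4 * j + 1) *
        (((p - j : ℕ) * centralBinom (p - j) * centralBinom j : ℤ) ^ 2 - 4 * p ^ 2) +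
      (p : ℤ) ^ 3 * (4 * (2 * p - 1)) := by
    simp only [mul_sub, sum_sub_distrib, ← sum_mul, sum_range_four_mul_add_one]
    ring
  rw [h_split]
  refine dvd_add (dvd_sum fun j hj => dvd_mul_of_dvd_right ?_ _) (dvd_mul_right _ _)
  exact cube_dvd_sq_mul_centralBinom_mul_centralBinom_sub hp hodd
    (Nat.add_sub_of_le (mem_range.mp hj).le) (Nat.sub_pos_of_lt (mem_range.mp hj))

end CentralBinomModPrime

theorem eq_zero_or_le_padicValRat_intCast_div {p : ℕ} [Fact p.Prime] {z : ℤ} {d k : ℕ}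
    (hz : (p : ℤ) ^ k ∣ z) (hd : ¬ p ∣ d) :
    (z / d : ℚ) = 0 ∨ (k : ℤ) ≤ padicValRat p (z / d) := by
  rcases eq_or_ne z 0 with rfl | hz0
  · simp
  have hd0 : d ≠ 0 := by rintro rfl; exact hd (dvd_zero p)
  right
  rw [padicValRat.div (by exact_mod_cast hz0) (by exact_mod_cast hd0), padicValRat.of_int,
    padicValRat.of_nat, padicValNat.eq_zero_of_not_dvd hd, Nat.cast_zero, sub_zero]
  exact_mod_cast ((padicValInt_dvd_iff k z).mp hz).resolve_left hz0

theorem stmt6 (p : ℕ) (hp : p.Prime) (hodd : Odd p) :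
    (∑ k ∈ range p, ((1 : ℚ) / 16 ^ k) *
        ∑ j ∈ range (k + 1),
          ((2 * j).choose j : ℚ) ^ 2 * ((2 * (k - j)).choose (k - j) : ℚ) ^ 2 *
            (4 * j + 1) * (4 * (k - j) + 1)) = 0 ∨
      3 ≤ padicValRat p
        (∑ k ∈ range p, ((1 : ℚ) / 16 ^ k) *
            ∑ j ∈ range (k + 1),
              ((2 * j).choose j : ℚ) ^ 2 * ((2 * (k - j)).choose (k - j) : ℚ) ^ 2 *
                (4 * j + 1) * (4 * (k - j) + 1)) := by
  have := Fact.mk hp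
  have h_conv : ∑ k ∈ range p, ((1 : ℚ) / 16 ^ k) * ∑ j ∈ range (k + 1),
      ((2 * j).choose j : ℚ) ^ 2 * ((2 * (k - j)).choose (k - j) : ℚ) ^ 2 *
        (4 * j + 1) * (4 * (k - j) + 1) =
      ∑ k ∈ range p, ∑ j ∈ range (k + 1), centralBinomTerm j * centralBinomTerm (k - j) := by
    refine sum_congr rfl fun k _ => ?_
    rw [mul_sum]
    refine sum_congr rfl fun j hj => ?_
    have hjk : j ≤ k := Nat.lt_succ_iff.mp (mem_range.mp hj)
    rw [centralBinomTerm, centralBinomTerm, ← pow_mul_pow_sub (16 : ℚ) hjk, Nat.cast_sub hjk]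
    simp only [centralBinom_eq_two_mul_choose]
    field_simp
  have h16 : ¬ p ∣ 16 ^ p := (hp.coprime_iff_not_dvd).mp
    (((Nat.coprime_two_right.mpr hodd).pow_right 4).pow_right p)
  have h := eq_zero_or_le_padicValRat_intCast_div
    (dvd_mul_of_dvd_right (cube_dvd_sum_range_mul_sq hp hodd) 4) h16
  push_cast at h
  rw [h_conv, sum_convolution_centralBinomTerm]
  exact_mod_cast h
end

section
/- For any odd prime p, ∑_{k=0}^{(p-1)/2} C(2k,k)/4^k ≡ 0 (mod p). -/
/-!
The partial sums have a closed form: by induction, using `(n + 1) * C(2n+2, n+1) = 2 (2n + 1) * C(2n, n)`,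
one gets `∑_{k ≤ n} C(2k, k) / 4^k = (2n + 1) C(2n, n) / 4^n`. For `n = (p - 1) / 2` the factor `2n + 1`
is `p` itself, while the remaining factor `C(2n, n) / 4^n` has `p`-adic valuation `≥ 0`.
-/

open Finset

theorem sum_range_choose_two_mul_div_four_pow (n : ℕ) :
    ∑ k ∈ range (n + 1), ((2 * k).choose k : ℚ) / 4 ^ k
      = (2 * n + 1) * (2 * n).choose n / 4 ^ n := by
  induction n with
  | zero => simp
  | succ n ih =>
    have step : ((n : ℚ) + 1) * (2 * (n + 1)).choose (n + 1)
        = 2 * (2 * n + 1) * (2 * n).choose n := by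
      exact_mod_cast Nat.succ_mul_centralBinom_succ n
    rw [sum_range_succ, ih, pow_succ]
    field_simp
    push_cast
    linear_combination -2 * step

theorem padicValRat_four_pow {p : ℕ} [Fact p.Prime] (hp2 : p ≠ 2) (n : ℕ) :
    padicValRat p (4 ^ n) = 0 := by
  rw [padicValRat.pow, show (4 : ℚ) = ((2 ^ 2 : ℕ) : ℚ) by norm_num,
    padicValRat.of_nat, padicValNat.pow, padicValNat_primes hp2]
  simp

theorem one_le_padicValRat_mul_div_four_pow {p c : ℕ} [hp : Fact p.Prime] (hp2 : p ≠ 2) (hc : c ≠ 0)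
    (n : ℕ) : 1 ≤ padicValRat p (p * c / 4 ^ n) := by
  have hp0 : (p : ℚ) ≠ 0 := by exact_mod_cast hp.out.ne_zero
  have hc0 : (c : ℚ) ≠ 0 := by exact_mod_cast hc
  rw [padicValRat.div (mul_ne_zero hp0 hc0) (by positivity), padicValRat.mul hp0 hc0,
    padicValRat.self hp.out.one_lt, padicValRat.of_nat, padicValRat_four_pow hp2]
  omega

theorem stmt9 (p : ℕ) (hp : p.Prime) (hodd : Odd p) :
    (∑ k ∈ range ((p - 1) / 2 + 1), ((2 * k).choose k : ℚ) / 4 ^ k) = 0 ∨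
      1 ≤ padicValRat p (∑ k ∈ range ((p - 1) / 2 + 1), ((2 * k).choose k : ℚ) / 4 ^ k) := by
  right
  have : Fact p.Prime := ⟨hp⟩
  obtain ⟨m, rfl⟩ := hodd
  have half : (2 * m + 1 - 1) / 2 = m := by omega
  rw [half, sum_range_choose_two_mul_div_four_pow]
  exact_mod_cast one_le_padicValRat_mul_div_four_pow (by omega) (Nat.centralBinom_ne_zero m) m
end

section
/- For any prime p with p ≡ 1 (mod 4), ∑_{k=0}^{p-1} ∑_{j=0}^{k} (8j+1)(8k-8j+1) · ((1/4)_j² (1/4)_{k-j}²)/(j!² (k-j)!²) ≡ p² · (∑_{k=0}^{(p-1)/4} (1/4)_k / k!)² (mod p²), where (a)_k denotes the Pochhammer symbol. -/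
/-!
Write `p = 4q + 1`, `c_j = (1/4)_j / j!` and `a_j = (8j + 1) c_j²`, so that the double sum is the
truncated Cauchy square `∑_{k<p} ∑_{j≤k} a_j a_{k-j}`. For `j < p` the map `x ↦ (x)_j / j!` is
`1`-Lipschitz for the `p`-adic norm on `p`-integral rationals, and `1/4 ≡ -q (mod p)`, so
`c_j ≡ (-1)^j C(q, j) (mod p)`. In particular `c_j ≡ 0` for `q < j < p`, hence `a_j ≡ 0 (mod p²)`
there, and dropping those terms turns the double sum into `(∑_{j≤q} a_j)²` modulo `p²`. Finally
`∑_{j≤q} a_j ≡ ∑_{j≤q} (8j + 1) C(q, j)² = p C(2q, q) ≡ 0 (mod p)`, while the right-hand side is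
`p²` times a `p`-integral number.
-/

open Finset

open scoped Nat

lemma two_mul_sum_range_mul_choose_sq (q : ℕ) :
    2 * ∑ j ∈ range (q + 1), j * q.choose j ^ 2 = q * (2 * q).choose q := by
  have hreflect : ∑ j ∈ range (q + 1), (q - j) * q.choose j ^ 2
      = ∑ j ∈ range (q + 1), j * q.choose j ^ 2 := by
    rw [← sum_range_reflect]
    refine sum_congr rfl fun j hj ↦ ?_
    have hjq : j ≤ q := by simp only [mem_range] at hj; omega
    rw [show q + 1 - 1 - j = q - j by omega, Nat.choose_symm hjq, Nat.sub_sub_self hjq]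
  calc 2 * ∑ j ∈ range (q + 1), j * q.choose j ^ 2
      = ∑ j ∈ range (q + 1), (j * q.choose j ^ 2 + (q - j) * q.choose j ^ 2) := by
        rw [sum_add_distrib, hreflect, two_mul]
    _ = ∑ j ∈ range (q + 1), q * q.choose j ^ 2 := by
        refine sum_congr rfl fun j hj ↦ ?_
        rw [← add_mul, Nat.add_sub_of_le (by simp only [mem_range] at hj; omega)]
    _ = q * (2 * q).choose q := by rw [← mul_sum, Nat.sum_range_choose_sq]

lemma sum_range_eight_mul_add_one_mul_choose_sq (q : ℕ) :
    ∑ j ∈ range (q + 1), (8 * j + 1) * q.choose j ^ 2 = (4 * q + 1) * (2 * q).choose q := by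
  simp only [add_mul, one_mul, sum_add_distrib, mul_assoc, ← mul_sum, Nat.sum_range_choose_sq]
  linarith [two_mul_sum_range_mul_choose_sq q]

lemma sum_range_diag_mul_eq_sq {R : Type*} [CommSemiring R] {f : ℕ → R} {q n : ℕ}
    (hf : ∀ j, q < j → f j = 0) (hn : 2 * q < n) :
    ∑ k ∈ range n, ∑ j ∈ range (k + 1), f j * f (k - j) = (∑ j ∈ range n, f j) ^ 2 := by
  rw [sum_range_diag_flip n fun i j ↦ f i * f j, sq, sum_mul_sum]
  refine sum_congr rfl fun i hi ↦ ?_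
  by_cases hiq : i ≤ q
  · refine sum_subset (range_subset_range.2 (Nat.sub_le n i)) fun j hj hj' ↦ ?_
    rw [hf j (by simp only [mem_range, not_lt] at hj hj'; omega), mul_zero]
  · simp [hf i (by omega)]

/-- The coefficient of `t ^ j` in `(1 - t) ^ (-x)`. -/
noncomputable def risingCoeff (x : ℚ) (j : ℕ) : ℚ := (ascPochhammer ℚ j).eval x / j !

lemma risingCoeff_eq_prod (x : ℚ) (j : ℕ) :
    risingCoeff x j = ∏ i ∈ range j, (x + i) / (i + 1 : ℕ) := by
  induction j with
  | zero => simp [risingCoeff]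
  | succ j ih =>
    rw [prod_range_succ, ← ih, risingCoeff, risingCoeff, ascPochhammer_succ_eval,
      Nat.factorial_succ]
    push_cast
    field_simp

lemma risingCoeff_neg_natCast (q j : ℕ) : risingCoeff (-q) j = (-1) ^ j * q.choose j := by
  rw [risingCoeff, ascPochhammer_eval_neg_eq_descPochhammer, descPochhammer_eval_eq_descFactorial,
    Nat.descFactorial_eq_factorial_mul_choose]
  push_cast
  field_simp

section PadicNorm

variable {p : ℕ} [Fact p.Prime]

lemma padicNorm_mul_sub_mul_le {a a' b b' ε : ℚ} (ha' : padicNorm p a' ≤ 1)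
    (hb : padicNorm p b ≤ 1) (ha : padicNorm p (a - a') ≤ ε) (hb' : padicNorm p (b - b') ≤ ε) :
    padicNorm p (a * b - a' * b') ≤ ε := by
  have hε : 0 ≤ ε := (padicNorm.nonneg _).trans ha
  rw [show a * b - a' * b' = (a - a') * b + a' * (b - b') by ring]
  refine padicNorm.nonarchimedean.trans (max_le ?_ ?_) <;> rw [padicNorm.mul]
  · simpa using mul_le_mul ha hb (padicNorm.nonneg _) hε
  · simpa using mul_le_mul ha' hb' (padicNorm.nonneg _) zero_le_one

lemma padicNorm_prod_le_one {ι : Type*} {s : Finset ι} {f : ι → ℚ}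
    (hf : ∀ i ∈ s, padicNorm p (f i) ≤ 1) : padicNorm p (∏ i ∈ s, f i) ≤ 1 := by
  classical
  induction s using Finset.induction_on with
  | empty => simp
  | insert i s hi ih =>
    rw [prod_insert hi, padicNorm.mul]
    exact mul_le_one₀ (hf i (mem_insert_self i s)) (padicNorm.nonneg _)
      (ih fun j hj ↦ hf j (mem_insert_of_mem hj))

lemma padicNorm_prod_sub_prod_le {ι : Type*} {s : Finset ι} {f g : ι → ℚ} {ε : ℚ} (hε : 0 ≤ ε)
    (hf : ∀ i ∈ s, padicNorm p (f i) ≤ 1) (hg : ∀ i ∈ s, padicNorm p (g i) ≤ 1)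
    (hfg : ∀ i ∈ s, padicNorm p (f i - g i) ≤ ε) :
    padicNorm p (∏ i ∈ s, f i - ∏ i ∈ s, g i) ≤ ε := by
  classical
  induction s using Finset.induction_on with
  | empty => simpa using hε
  | insert i s hi ih =>
    rw [prod_insert hi, prod_insert hi]
    exact padicNorm_mul_sub_mul_le (hg i (mem_insert_self i s))
      (padicNorm_prod_le_one fun j hj ↦ hf j (mem_insert_of_mem hj)) (hfg i (mem_insert_self i s))
      (ih (fun j hj ↦ hf j (mem_insert_of_mem hj)) (fun j hj ↦ hg j (mem_insert_of_mem hj))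
        fun j hj ↦ hfg j (mem_insert_of_mem hj))

lemma padicNorm_div_natCast_of_lt (x : ℚ) {n : ℕ} (hn₀ : 0 < n) (hn : n < p) :
    padicNorm p (x / n) = padicNorm p x := by
  rw [padicNorm.div, (padicNorm.nat_eq_one_iff n).2 (Nat.not_dvd_of_pos_of_lt hn₀ hn), div_one]

lemma padicNorm_sum_range_diag_sub_le {f g : ℕ → ℚ} {n : ℕ} {ε : ℚ} (hε : 0 ≤ ε)
    (hf : ∀ j < n, padicNorm p (f j) ≤ 1) (hg : ∀ j < n, padicNorm p (g j) ≤ 1)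
    (hfg : ∀ j < n, padicNorm p (f j - g j) ≤ ε) :
    padicNorm p (∑ k ∈ range n, ∑ j ∈ range (k + 1), f j * f (k - j) -
      ∑ k ∈ range n, ∑ j ∈ range (k + 1), g j * g (k - j)) ≤ ε := by
  simp only [← sum_sub_distrib]
  refine padicNorm.sum_le' (fun k hk ↦ padicNorm.sum_le' (fun j hj ↦ ?_) hε) hε
  simp only [mem_range] at hk hj
  exact padicNorm_mul_sub_mul_le (hg j (by omega)) (hf _ (by omega)) (hfg j (by omega))
    (hfg _ (by omega))

lemma eq_zero_or_le_padicValRat_of_padicNorm_le {x : ℚ} {n : ℕ}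
    (h : padicNorm p x ≤ (p : ℚ)⁻¹ ^ n) : x = 0 ∨ n ≤ padicValRat p x := by
  refine or_iff_not_imp_left.2 fun hx ↦ ?_
  rw [padicNorm.eq_zpow_of_nonzero hx, inv_pow, ← zpow_natCast, ← zpow_neg,
    zpow_le_zpow_iff_right₀ (by exact_mod_cast (Fact.out : p.Prime).one_lt)] at h
  omega

lemma padicNorm_four (hp : p ≠ 2) : padicNorm p 4 = 1 := by
  refine (padicNorm.nat_eq_one_iff 4).2 fun h ↦ hp ?_
  have h2 : p ∣ 2 := (Fact.out : p.Prime).dvd_of_dvd_pow (n := 2) (by simpa using h)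
  exact (Nat.prime_dvd_prime_iff_eq Fact.out Nat.prime_two).1 h2

lemma padicNorm_one_div_four (hp : p ≠ 2) : padicNorm p (1 / 4) = 1 := by
  rw [padicNorm.div, padicNorm_four hp, padicNorm.one, div_one]

lemma padicNorm_neg_natCast_le_one (q : ℕ) : padicNorm p (-q) ≤ 1 := by
  rw [padicNorm.neg]
  exact padicNorm.of_nat q

lemma padicNorm_risingCoeff_le_one {x : ℚ} (hx : padicNorm p x ≤ 1) {j : ℕ} (hj : j < p) :
    padicNorm p (risingCoeff x j) ≤ 1 := by
  rw [risingCoeff_eq_prod]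
  refine padicNorm_prod_le_one fun i hi ↦ ?_
  rw [padicNorm_div_natCast_of_lt _ i.succ_pos (by simp only [mem_range] at hi; omega)]
  exact padicNorm.nonarchimedean.trans (max_le hx (padicNorm.of_nat i))

lemma padicNorm_risingCoeff_sub_le {x y : ℚ} (hx : padicNorm p x ≤ 1) (hy : padicNorm p y ≤ 1)
    {j : ℕ} (hj : j < p) :
    padicNorm p (risingCoeff x j - risingCoeff y j) ≤ padicNorm p (x - y) := by
  rw [risingCoeff_eq_prod, risingCoeff_eq_prod]
  refine padicNorm_prod_sub_prod_le (padicNorm.nonneg _)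
    (fun i hi ↦ ?_) (fun i hi ↦ ?_) fun i hi ↦ ?_ <;>
    have hi : i + 1 < p := by simp only [mem_range] at hi; omega
  · rw [padicNorm_div_natCast_of_lt _ i.succ_pos hi]
    exact padicNorm.nonarchimedean.trans (max_le hx (padicNorm.of_nat i))
  · rw [padicNorm_div_natCast_of_lt _ i.succ_pos hi]
    exact padicNorm.nonarchimedean.trans (max_le hy (padicNorm.of_nat i))
  · rw [← sub_div, padicNorm_div_natCast_of_lt _ i.succ_pos hi, add_sub_add_right_eq_sub]

end PadicNorm

section Quarter

variable {p q : ℕ} [Fact p.Prime]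

noncomputable def quarterSummand (j : ℕ) : ℚ := (8 * j + 1) * risingCoeff (1 / 4) j ^ 2

lemma padicNorm_eight_mul_add_one_le_one (j : ℕ) : padicNorm p (8 * j + 1) ≤ 1 := by
  exact_mod_cast padicNorm.of_nat (8 * j + 1)

lemma padicNorm_one_div_four_sub_neg (hpq : p = 4 * q + 1) :
    padicNorm p (1 / 4 - (-q : ℚ)) = (p : ℚ)⁻¹ := by
  rw [show 1 / 4 - (-q : ℚ) = p / 4 by rw [hpq]; push_cast; ring, padicNorm.div,
    padicNorm_four (by omega), padicNorm.padicNorm_p_of_prime, div_one]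

lemma padicNorm_risingCoeff_quarter_sub_le (hpq : p = 4 * q + 1) {j : ℕ} (hj : j < p) :
    padicNorm p (risingCoeff (1 / 4) j - risingCoeff (-q) j) ≤ (p : ℚ)⁻¹ := by
  rw [← padicNorm_one_div_four_sub_neg hpq]
  exact padicNorm_risingCoeff_sub_le (padicNorm_one_div_four (by omega)).le
    (padicNorm_neg_natCast_le_one q) hj

lemma padicNorm_risingCoeff_quarter_le (hpq : p = 4 * q + 1) {j : ℕ} (hqj : q < j) (hj : j < p) :
    padicNorm p (risingCoeff (1 / 4) j) ≤ (p : ℚ)⁻¹ := by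
  simpa [risingCoeff_neg_natCast, Nat.choose_eq_zero_of_lt hqj] using
    padicNorm_risingCoeff_quarter_sub_le hpq hj

lemma padicNorm_quarterSummand_le_one (hpq : p = 4 * q + 1) {j : ℕ} (hj : j < p) :
    padicNorm p (quarterSummand j) ≤ 1 := by
  rw [quarterSummand, padicNorm.mul, sq, padicNorm.mul]
  have hc := padicNorm_risingCoeff_le_one (padicNorm_one_div_four (by omega)).le hj
  have h8 := padicNorm_eight_mul_add_one_le_one (p := p) j
  exact mul_le_one₀ h8 (mul_nonneg (padicNorm.nonneg _) (padicNorm.nonneg _))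
    (mul_le_one₀ hc (padicNorm.nonneg _) hc)

lemma padicNorm_quarterSummand_le (hpq : p = 4 * q + 1) {j : ℕ} (hqj : q < j) (hj : j < p) :
    padicNorm p (quarterSummand j) ≤ (p : ℚ)⁻¹ ^ 2 := by
  rw [quarterSummand, padicNorm.mul, sq, padicNorm.mul, sq]
  have hc := padicNorm_risingCoeff_quarter_le hpq hqj hj
  have h8 := padicNorm_eight_mul_add_one_le_one (p := p) j
  simpa using mul_le_mul h8 (mul_le_mul hc hc (padicNorm.nonneg _) (by positivity))
    (mul_nonneg (padicNorm.nonneg _) (padicNorm.nonneg _)) zero_le_one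

lemma padicNorm_sum_quarterSummand_le (hpq : p = 4 * q + 1) :
    padicNorm p (∑ j ∈ range (q + 1), quarterSummand j) ≤ (p : ℚ)⁻¹ := by
  have hsum : ∑ j ∈ range (q + 1), (8 * j + 1 : ℚ) * q.choose j ^ 2 = p * (2 * q).choose q := by
    rw [hpq]
    exact_mod_cast sum_range_eight_mul_add_one_mul_choose_sq q
  have hterm : ∀ j ∈ range (q + 1),
      padicNorm p (quarterSummand j - (8 * j + 1) * q.choose j ^ 2) ≤ (p : ℚ)⁻¹ := by
    intro j hj
    have hj : j < p := by simp only [mem_range] at hj; omega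
    have hsq : (q.choose j : ℚ) ^ 2 = risingCoeff (-q) j * risingCoeff (-q) j := by
      rw [risingCoeff_neg_natCast, ← sq, mul_pow, ← pow_mul, pow_mul', neg_one_sq, one_pow,
        one_mul]
    have hc := padicNorm_risingCoeff_quarter_sub_le hpq hj
    rw [hsq, quarterSummand, sq, ← mul_sub, padicNorm.mul]
    have h8 := padicNorm_eight_mul_add_one_le_one (p := p) j
    simpa using mul_le_mul h8 (padicNorm_mul_sub_mul_le
      (padicNorm_risingCoeff_le_one (padicNorm_neg_natCast_le_one q) hj)
      (padicNorm_risingCoeff_le_one (padicNorm_one_div_four (by omega)).le hj) hc hc)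
      (padicNorm.nonneg _) zero_le_one
  rw [← sub_add_cancel (∑ j ∈ range (q + 1), quarterSummand j)
    (∑ j ∈ range (q + 1), (8 * j + 1 : ℚ) * q.choose j ^ 2), ← sum_sub_distrib, hsum]
  refine padicNorm.nonarchimedean.trans (max_le (padicNorm.sum_le' hterm (by positivity)) ?_)
  rw [padicNorm.mul, padicNorm.padicNorm_p_of_prime]
  simpa using mul_le_mul_of_nonneg_left (padicNorm.of_nat ((2 * q).choose q)) (by positivity)

lemma padicNorm_sum_diag_quarterSummand_sub_sq_le (hpq : p = 4 * q + 1) :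
    padicNorm p (∑ k ∈ range p, ∑ j ∈ range (k + 1), quarterSummand j * quarterSummand (k - j) -
      (∑ j ∈ range (q + 1), quarterSummand j) ^ 2) ≤ (p : ℚ)⁻¹ ^ 2 := by
  set a : ℕ → ℚ := fun j ↦ if j ≤ q then quarterSummand j else 0 with ha
  have htrunc : ∑ k ∈ range p, ∑ j ∈ range (k + 1), a j * a (k - j)
      = (∑ j ∈ range (q + 1), quarterSummand j) ^ 2 := by
    rw [sum_range_diag_mul_eq_sq (q := q) (fun j hj ↦ if_neg (by omega)) (by omega), ← sum_filter]
    congr 2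
    ext j
    simp only [mem_filter, mem_range]
    omega
  rw [← htrunc]
  refine padicNorm_sum_range_diag_sub_le (by positivity)
    (fun j hj ↦ padicNorm_quarterSummand_le_one hpq hj) (fun j hj ↦ ?_) fun j hj ↦ ?_ <;>
    simp only [ha] <;> split_ifs with hjq
  · exact padicNorm_quarterSummand_le_one hpq hj
  · simp
  · simp
  · simpa using padicNorm_quarterSummand_le hpq (by omega) hj

lemma padicNorm_sum_diag_quarterSummand_sub_le (hpq : p = 4 * q + 1) :
    padicNorm p (∑ k ∈ range p, ∑ j ∈ range (k + 1), quarterSummand j * quarterSummand (k - j) -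
      p ^ 2 * (∑ k ∈ range (q + 1), risingCoeff (1 / 4) k) ^ 2) ≤ (p : ℚ)⁻¹ ^ 2 := by
  set L := ∑ k ∈ range p, ∑ j ∈ range (k + 1), quarterSummand j * quarterSummand (k - j)
  set S := ∑ j ∈ range (q + 1), quarterSummand j
  set T := ∑ k ∈ range (q + 1), risingCoeff (1 / 4) k
  have hS := padicNorm_sum_quarterSummand_le hpq
  have hT : padicNorm p T ≤ 1 :=
    padicNorm.sum_le' (fun k hk ↦ padicNorm_risingCoeff_le_one
      (padicNorm_one_div_four (by omega)).le (by simp only [mem_range] at hk; omega)) zero_le_one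
  rw [← sub_add_cancel L (S ^ 2)]
  refine padicNorm.sub.trans (max_le (padicNorm.nonarchimedean.trans
    (max_le (padicNorm_sum_diag_quarterSummand_sub_sq_le hpq) ?_)) ?_)
  · rw [sq, padicNorm.mul, sq]
    exact mul_le_mul hS hS (padicNorm.nonneg _) (by positivity)
  · rw [padicNorm.mul, sq (p : ℚ), padicNorm.mul, padicNorm.padicNorm_p_of_prime, ← sq, sq T,
      padicNorm.mul]
    exact mul_le_of_le_one_right (by positivity) (mul_le_one₀ hT (padicNorm.nonneg _) hT)

end Quarter

theorem stmt11 (p : ℕ) (hp : p.Prime) (hmod : p % 4 = 1) :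
    (∑ k ∈ range p,
        ∑ j ∈ range (k + 1),
          (8 * j + 1 : ℚ) * (8 * (k - j) + 1) *
            (((ascPochhammer ℚ j).eval ((1 : ℚ) / 4)) ^ 2 *
              ((ascPochhammer ℚ (k - j)).eval ((1 : ℚ) / 4)) ^ 2) /
            ((j.factorial : ℚ) ^ 2 * ((k - j).factorial : ℚ) ^ 2)) -
      (p : ℚ) ^ 2 *
        (∑ k ∈ range ((p - 1) / 4 + 1),
            (ascPochhammer ℚ k).eval ((1 : ℚ) / 4) / (k.factorial : ℚ)) ^ 2 = 0 ∨
      2 ≤ padicValRat p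
        ((∑ k ∈ range p,
            ∑ j ∈ range (k + 1),
              (8 * j + 1 : ℚ) * (8 * (k - j) + 1) *
                (((ascPochhammer ℚ j).eval ((1 : ℚ) / 4)) ^ 2 *
                  ((ascPochhammer ℚ (k - j)).eval ((1 : ℚ) / 4)) ^ 2) /
                ((j.factorial : ℚ) ^ 2 * ((k - j).factorial : ℚ) ^ 2)) -
          (p : ℚ) ^ 2 *
            (∑ k ∈ range ((p - 1) / 4 + 1),
                (ascPochhammer ℚ k).eval ((1 : ℚ) / 4) / (k.factorial : ℚ)) ^ 2) := by
  have := Fact.mk hp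
  have hsummand : ∀ k ∈ range p, ∀ j ∈ range (k + 1),
      (8 * j + 1 : ℚ) * (8 * (k - j) + 1) *
          (((ascPochhammer ℚ j).eval ((1 : ℚ) / 4)) ^ 2 *
            ((ascPochhammer ℚ (k - j)).eval ((1 : ℚ) / 4)) ^ 2) /
          ((j.factorial : ℚ) ^ 2 * ((k - j).factorial : ℚ) ^ 2)
        = quarterSummand j * quarterSummand (k - j) := by
    intro k _ j hj
    rw [quarterSummand, quarterSummand, risingCoeff, risingCoeff,
      Nat.cast_sub (by simp only [mem_range] at hj; omega)]
    ring
  rw [sum_congr rfl fun k hk ↦ sum_congr rfl (hsummand k hk)]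
  exact eq_zero_or_le_padicValRat_of_padicNorm_le
    (padicNorm_sum_diag_quarterSummand_sub_le (q := (p - 1) / 4) (by omega))
end
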